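/- Let K be SPSD with eigenvalues σ₁ ≥ ⋯ ≥ σ_n ≥ 0 and let s, k be positive integers with s ≥ k. Then Σ_{i=s+1}^{s+k} σ_i ≤ (k/s) Σ_{i=k+1}^{s+k} σ_i, and consequently ‖K − K_s‖_* + Σ_{i=s+1}^{s+k} σ_i ≤ (1 + k/s)·‖K − K_k‖_* (interpreting sums past index n as zero). -/

import Mathlib

open Matrix

noncomputable def frobSq {n m : ℕ} (A : Matrix (Fin n) (Fin m) ℝ) : ℝ :=
  ∑ i, ∑ j, (A i j) ^ 2

noncomputable def traceNorm {n m : ℕ} (A : Matrix (Fin n) (Fin m) ℝ) : ℝ :=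
  ∑ j, Real.sqrt ((Matrix.isHermitian_conjTranspose_mul_self A).eigenvalues j)

def IsTruncatedSVD {n m : ℕ} (A B : Matrix (Fin n) (Fin m) ℝ) (s : ℕ) : Prop :=
  B.rank ≤ s ∧ ∀ Z : Matrix (Fin n) (Fin m) ℝ, Z.rank ≤ s → frobSq (A - B) ≤ frobSq (A - Z)

namespace TailAux

variable {n : ℕ}

lemma dot_eq_sum_sq (x : Fin n → ℝ) : x ⬝ᵥ x = ∑ i, x i ^ 2 := by
  simp [dotProduct, sq]

lemma orth_dot {V : Matrix (Fin n) (Fin n) ℝ} (hV : Vᵀ * V = 1) (x y : Fin n → ℝ) :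
    (V *ᵥ x) ⬝ᵥ (V *ᵥ y) = x ⬝ᵥ y := by
  rw [dotProduct_mulVec, vecMul_mulVec, hV, vecMul_one]

lemma frobSq_eq_trace (A : Matrix (Fin n) (Fin n) ℝ) : frobSq A = (Aᵀ * A).trace := by
  rw [Matrix.trace, frobSq, Finset.sum_comm]
  congr 1; ext j
  simp [Matrix.diag, Matrix.mul_apply, sq]

lemma frobSq_conj {V : Matrix (Fin n) (Fin n) ℝ} (hV : Vᵀ * V = 1)
    (M : Matrix (Fin n) (Fin n) ℝ) : frobSq (V * M * Vᵀ) = frobSq M := by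
  have hV' : V * Vᵀ = 1 := mul_eq_one_comm.mp hV
  rw [frobSq_eq_trace, frobSq_eq_trace]
  have : (V * M * Vᵀ)ᵀ * (V * M * Vᵀ) = V * (Mᵀ * M) * Vᵀ := by
    simp only [Matrix.transpose_mul, Matrix.transpose_transpose, Matrix.mul_assoc]
    rw [← Matrix.mul_assoc Vᵀ V, hV, Matrix.one_mul]
  rw [this, Matrix.trace_mul_cycle, ← Matrix.mul_assoc, hV, Matrix.one_mul]

lemma card_ge (a : ℕ) (ha : a ≤ n) : Fintype.card {i : Fin n // a ≤ i.val} = n - a := by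
  have : Function.Bijective (fun j : Fin (n - a) => (⟨⟨a + j.val, by omega⟩, by simp⟩ :
      {i : Fin n // a ≤ i.val})) := by
    constructor
    · intro j1 j2 h
      have := congrArg (fun x => x.val.val) h
      simp only at this
      exact Fin.ext (by omega)
    · rintro ⟨i, hi⟩
      exact ⟨⟨i.val - a, by omega⟩, by ext; simp; omega⟩
  rw [← Fintype.card_of_bijective this, Fintype.card_fin]

lemma card_gt (a : ℕ) (ha : a + 1 ≤ n) :
    Fintype.card {i : Fin n // a < i.val} = n - (a + 1) := by
  rw [Fintype.card_congr (Equiv.subtypeEquivRight (q := fun i : Fin n => a + 1 ≤ i.val)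
    (fun i => by omega))]
  exact card_ge (a + 1) ha

lemma card_lt (a : ℕ) : Fintype.card {i : Fin n // i.val < a} ≤ a := by
  have : Function.Injective (fun i : {i : Fin n // i.val < a} => (⟨i.val.val, i.2⟩ : Fin a)) := by
    rintro ⟨i, hi⟩ ⟨j, hj⟩ h
    simp only [Fin.mk.injEq] at h
    exact Subtype.ext (Fin.ext h)
  simpa using Fintype.card_le_of_injective _ this

lemma quad_form (W : Matrix (Fin n) (Fin n) ℝ) (μ : Fin n → ℝ) (x : Fin n → ℝ) :
    x ⬝ᵥ ((W * diagonal μ * Wᵀ) *ᵥ x) = ∑ j, μ j * ((Wᵀ *ᵥ x) j) ^ 2 := by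
  rw [← mulVec_mulVec, ← mulVec_mulVec, dotProduct_mulVec, ← mulVec_transpose]
  simp only [dotProduct, mulVec_diagonal]
  exact Finset.sum_congr rfl fun j _ => by ring

end TailAux

set_option maxHeartbeats 1000000 in
open TailAux in
lemma traceNorm_trunc {n r : ℕ} (K V : Matrix (Fin n) (Fin n) ℝ)
    (hV : Vᵀ * V = 1) (σ : Fin n → ℝ) (hσ0 : ∀ i, 0 ≤ σ i)
    (hσmono : ∀ i j : Fin n, i ≤ j → σ j ≤ σ i)
    (hspec : K = V * diagonal σ * Vᵀ)
    (B : Matrix (Fin n) (Fin n) ℝ) (hB : IsTruncatedSVD K B r) :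
    traceNorm (K - B) = ∑ t ∈ Finset.range n, (if h : r + t < n then σ ⟨r + t, h⟩ else 0) := by
  classical
  obtain ⟨hBrank, hBopt⟩ := hB
  have hV' : V * Vᵀ = 1 := mul_eq_one_comm.mp hV
  set E : Matrix (Fin n) (Fin n) ℝ := K - B with hEdef
  have hH : (Eᵀ * E).IsHermitian := Matrix.isHermitian_conjTranspose_mul_self E
  set μ : Fin n → ℝ := hH.eigenvalues with hμdef
  set U : Matrix (Fin n) (Fin n) ℝ := (hH.eigenvectorUnitary : Matrix (Fin n) (Fin n) ℝ)
    with hUdef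
  have hstar : star U = Uᵀ := by
    rw [Matrix.star_eq_conjTranspose, Matrix.conjTranspose_eq_transpose_of_trivial]
  have hU : Uᵀ * U = 1 := by
    have h := Matrix.mem_unitaryGroup_iff'.mp hH.eigenvectorUnitary.2
    rwa [hstar] at h
  have hU' : U * Uᵀ = 1 := mul_eq_one_comm.mp hU
  have hsp : Eᵀ * E = U * diagonal μ * Uᵀ := by
    have h1 := hH.spectral_theorem
    rw [Unitary.conjStarAlgAut_apply, ← hUdef, hstar] at h1
    rw [h1]
    congr 3
  have hPSD : (Eᵀ * E).PosSemidef := by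
    have h := Matrix.posSemidef_conjTranspose_mul_self E
    rwa [Matrix.conjTranspose_eq_transpose_of_trivial] at h
  have hμ0 : ∀ j, 0 ≤ μ j := hPSD.eigenvalues_nonneg
  set g : Equiv.Perm (Fin n) := Tuple.sort μ with hgdef
  set d : Fin n → ℝ := fun t => μ (g t.rev) with hddef
  set aF : Fin n → ℝ := fun t => if h : r + t.val < n then σ ⟨r + t.val, h⟩ ^ 2 else 0
    with haFdef
  -- Claim 1 : Weyl-type lower bound on sorted eigenvalues
  have claim1 : ∀ t : Fin n, aF t ≤ d t := by
    intro t
    simp only [haFdef]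
    split
    case isFalse => exact hμ0 _
    case isTrue h =>
    set rt : Fin n := ⟨r + t.val, h⟩ with hrtdef
    set L1 : (Fin n → ℝ) →ₗ[ℝ] ({i : Fin n // r + t.val < i.val} → ℝ) :=
      (LinearMap.funLeft ℝ ℝ Subtype.val).comp (Vᵀ).mulVecLin with hL1
    set L3 : (Fin n → ℝ) →ₗ[ℝ] ({j : Fin n // j.val < t.val} → ℝ) :=
      (LinearMap.funLeft ℝ ℝ (fun j => g (Fin.rev j.val))).comp (Uᵀ).mulVecLin with hL3
    have dim1 : r + t.val + 1 ≤ Module.finrank ℝ (LinearMap.ker L1) := by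
      have h1 := LinearMap.finrank_range_add_finrank_ker L1
      have h2 : Module.finrank ℝ (LinearMap.range L1) ≤ n - (r + t.val + 1) := by
        refine le_trans (Submodule.finrank_le _) ?_
        rw [Module.finrank_fintype_fun_eq_card]
        exact le_of_eq (card_gt (r + t.val) h)
      rw [Module.finrank_fintype_fun_eq_card, Fintype.card_fin] at h1
      omega
    have dim2 : n - r ≤ Module.finrank ℝ (LinearMap.ker B.mulVecLin) := by
      have h1 := LinearMap.finrank_range_add_finrank_ker B.mulVecLin
      rw [Module.finrank_fintype_fun_eq_card, Fintype.card_fin] at h1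
      have h2 : Module.finrank ℝ (LinearMap.range B.mulVecLin) ≤ r := hBrank
      omega
    have dim3 : n - t.val ≤ Module.finrank ℝ (LinearMap.ker L3) := by
      have h1 := LinearMap.finrank_range_add_finrank_ker L3
      have h2 : Module.finrank ℝ (LinearMap.range L3) ≤ t.val := by
        refine le_trans (Submodule.finrank_le _) ?_
        rw [Module.finrank_fintype_fun_eq_card]
        exact card_lt t.val
      rw [Module.finrank_fintype_fun_eq_card, Fintype.card_fin] at h1
      omega
    have hfin : ∀ p : Submodule ℝ (Fin n → ℝ), Module.finrank ℝ p ≤ n := by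
      intro p
      refine le_trans (Submodule.finrank_le _) ?_
      rw [Module.finrank_fintype_fun_eq_card, Fintype.card_fin]
    have i12 := Submodule.finrank_sup_add_finrank_inf_eq
      (LinearMap.ker L1) (LinearMap.ker B.mulVecLin)
    have i3 := Submodule.finrank_sup_add_finrank_inf_eq
      (LinearMap.ker L1 ⊓ LinearMap.ker B.mulVecLin) (LinearMap.ker L3)
    have dimW : 0 < Module.finrank ℝ
        ((LinearMap.ker L1 ⊓ LinearMap.ker B.mulVecLin) ⊓ LinearMap.ker L3 :
          Submodule ℝ (Fin n → ℝ)) := by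
      have s1 := hfin (LinearMap.ker L1 ⊔ LinearMap.ker B.mulVecLin)
      have s2 := hfin ((LinearMap.ker L1 ⊓ LinearMap.ker B.mulVecLin) ⊔ LinearMap.ker L3)
      have ht : t.val < n := t.isLt
      omega
    have hWne : ((LinearMap.ker L1 ⊓ LinearMap.ker B.mulVecLin) ⊓ LinearMap.ker L3 :
        Submodule ℝ (Fin n → ℝ)) ≠ ⊥ := by
      intro hbot
      rw [hbot, finrank_bot] at dimW
      exact lt_irrefl 0 dimW
    obtain ⟨x, hxW, hx0⟩ := Submodule.exists_mem_ne_zero_of_ne_bot hWne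
    obtain ⟨⟨hx1, hx2⟩, hx3⟩ := hxW
    -- unfold memberships
    have hc0 : ∀ i : Fin n, r + t.val < i.val → (Vᵀ *ᵥ x) i = 0 := by
      intro i hi
      have hk := LinearMap.mem_ker.mp hx1
      have := congrFun hk ⟨i, hi⟩
      rw [Matrix.mulVec_transpose]
      simpa [hL1, LinearMap.funLeft_apply, Matrix.mulVecLin_apply,
        Matrix.mulVec_transpose] using this
    have hBx : B *ᵥ x = 0 := by
      have hk := LinearMap.mem_ker.mp hx2
      simpa [Matrix.mulVecLin_apply] using hk
    have hx3' : ∀ j : Fin n, j.val < t.val → (Uᵀ *ᵥ x) (g (Fin.rev j)) = 0 := by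
      intro j hj
      have hk := LinearMap.mem_ker.mp hx3
      have := congrFun hk ⟨j, hj⟩
      rw [Matrix.mulVec_transpose]
      simpa [hL3, LinearMap.funLeft_apply, Matrix.mulVecLin_apply,
        Matrix.mulVec_transpose] using this
    -- lower bound via K
    set c : Fin n → ℝ := Vᵀ *ᵥ x with hc
    have hxV : V *ᵥ c = x := by rw [hc, mulVec_mulVec, hV', one_mulVec]
    have hKx : K *ᵥ x = V *ᵥ (fun i => σ i * c i) := by
      have hdiag : diagonal σ *ᵥ c = fun i => σ i * c i :=
        funext fun i => Matrix.mulVec_diagonal σ c i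
      rw [hspec, ← mulVec_mulVec, ← mulVec_mulVec, hdiag]
    have hnormx : x ⬝ᵥ x = ∑ i, c i ^ 2 := by
      rw [← hxV, orth_dot hV, dot_eq_sum_sq]
    have hnormKx : (K *ᵥ x) ⬝ᵥ (K *ᵥ x) = ∑ i, (σ i * c i) ^ 2 := by
      rw [hKx, orth_dot hV, dot_eq_sum_sq]
    have hlow : σ rt ^ 2 * (x ⬝ᵥ x) ≤ (K *ᵥ x) ⬝ᵥ (K *ᵥ x) := by
      rw [hnormx, hnormKx, Finset.mul_sum]
      refine Finset.sum_le_sum fun i _ => ?_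
      by_cases hi : i.val ≤ r + t.val
      · have hile : i ≤ rt := by
          rw [Fin.le_def]
          exact hi
        have hσi : σ rt ≤ σ i := hσmono i rt hile
        have h2 : σ rt ^ 2 ≤ σ i ^ 2 := by
          rw [sq, sq]
          exact mul_self_le_mul_self (hσ0 rt) hσi
        calc σ rt ^ 2 * c i ^ 2 ≤ σ i ^ 2 * c i ^ 2 :=
              mul_le_mul_of_nonneg_right h2 (sq_nonneg _)
          _ = (σ i * c i) ^ 2 := (mul_pow _ _ _).symm
      · rw [hc0 i (by omega)]
        simp
    have hEx : E *ᵥ x = K *ᵥ x := by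
      rw [hEdef, Matrix.sub_mulVec, hBx, sub_zero]
    have hq1 : x ⬝ᵥ ((Eᵀ * E) *ᵥ x) = (E *ᵥ x) ⬝ᵥ (E *ᵥ x) := by
      rw [← mulVec_mulVec, dotProduct_mulVec, vecMul_transpose]
    have hq2 : x ⬝ᵥ ((Eᵀ * E) *ᵥ x) = ∑ j, μ j * ((Uᵀ *ᵥ x) j) ^ 2 := by
      rw [hsp]
      exact quad_form U μ x
    set c' : Fin n → ℝ := Uᵀ *ᵥ x with hc'
    have hUU : (Uᵀ)ᵀ * Uᵀ = 1 := by rw [transpose_transpose]; exact hU'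
    have hnormx' : x ⬝ᵥ x = ∑ j, c' j ^ 2 := by
      have := orth_dot hUU x x
      rw [← this, dot_eq_sum_sq]
    have hupper : x ⬝ᵥ ((Eᵀ * E) *ᵥ x) ≤ μ (g t.rev) * (x ⬝ᵥ x) := by
      rw [hq2, hnormx', Finset.mul_sum]
      rw [← Equiv.sum_comp ((Fin.revPerm).trans g) (fun j => μ j * c' j ^ 2)]
      rw [← Equiv.sum_comp ((Fin.revPerm).trans g) (fun j => μ (g t.rev) * c' j ^ 2)]
      refine Finset.sum_le_sum fun j _ => ?_
      simp only [Equiv.trans_apply, Fin.revPerm_apply]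
      by_cases hj : j.val < t.val
      · rw [hx3' j hj]
        simp
      · have hmono : (μ ∘ (Tuple.sort μ)) (Fin.rev j) ≤ (μ ∘ (Tuple.sort μ)) (Fin.rev t) :=
          Tuple.monotone_sort μ (Fin.rev_le_rev.mpr (by
            rw [Fin.le_def]; omega))
        exact mul_le_mul_of_nonneg_right hmono (sq_nonneg _)
    have hxx_pos : 0 < x ⬝ᵥ x := by
      have h0 : 0 ≤ x ⬝ᵥ x := by rw [dot_eq_sum_sq]; positivity
      rcases h0.lt_or_eq with h' | h'
      · exact h'
      · exact absurd (dotProduct_self_eq_zero.mp h'.symm) hx0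
    have e1 : (K *ᵥ x) ⬝ᵥ (K *ᵥ x) = x ⬝ᵥ ((Eᵀ * E) *ᵥ x) := by rw [hq1, hEx]
    have final : σ rt ^ 2 * (x ⬝ᵥ x) ≤ μ (g t.rev) * (x ⬝ᵥ x) := by
      rw [← e1] at hupper
      exact le_trans hlow hupper
    exact (mul_le_mul_iff_of_pos_right hxx_pos).mp final
  -- trace identity
  have htrace : (∑ j, μ j) = frobSq E := by
    rw [frobSq_eq_trace, hsp, Matrix.trace_mul_cycle, hU, Matrix.one_mul]
    simp [Matrix.trace_diagonal]
  -- comparison matrix Z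
  set σtr : Fin n → ℝ := fun i => if i.val < r then σ i else 0 with hσtrdef
  set Z : Matrix (Fin n) (Fin n) ℝ := V * diagonal σtr * Vᵀ with hZdef
  have hZrank : Z.rank ≤ r := by
    refine le_trans (Matrix.rank_mul_le_left _ _) (le_trans (Matrix.rank_mul_le_right _ _) ?_)
    rw [Matrix.rank_diagonal]
    have hbound : ∀ i : Fin n, σtr i ≠ 0 → i.val < r := by
      intro i hi
      by_contra hcon
      exact hi (by simp only [hσtrdef]; rw [if_neg hcon])
    have hinj : Function.Injective
        (fun i : {i : Fin n // σtr i ≠ 0} => (⟨i.val.val, hbound i.val i.2⟩ : Fin r)) := by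
      rintro ⟨i, hi⟩ ⟨j, hj⟩ h
      simp only [Fin.mk.injEq] at h
      exact Subtype.ext (Fin.ext h)
    simpa using Fintype.card_le_of_injective _ hinj
  have hKZ : K - Z = V * diagonal (fun i => σ i - σtr i) * Vᵀ := by
    rw [hspec, hZdef, ← Matrix.sub_mul, ← Matrix.mul_sub, Matrix.diagonal_sub]
  have hfrobKZ : frobSq (K - Z) = ∑ t, aF t := by
    rw [hKZ, frobSq_conj hV]
    have h1 : frobSq (diagonal fun i => σ i - σtr i) = ∑ i, (σ i - σtr i) ^ 2 := by
      rw [frobSq]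
      congr 1; ext i
      rw [Finset.sum_eq_single i (fun j _ hj => by
        simp [Matrix.diagonal_apply_ne' _ hj]) (by simp)]
      simp [Matrix.diagonal_apply_eq]
    rw [h1]
    have h2 : (∑ i, (σ i - σtr i) ^ 2) = ∑ i : Fin n, (if r ≤ i.val then σ i ^ 2 else 0) := by
      congr 1; ext i
      by_cases hi : i.val < r
      · simp only [hσtrdef]
        rw [if_pos hi, if_neg (by omega)]
        ring
      · simp only [hσtrdef]
        rw [if_neg hi, if_pos (by omega)]
        ring
    rw [h2]
    -- reindex both sides through Finset.Ico r n
    have h3 : (∑ i : Fin n, (if r ≤ i.val then σ i ^ 2 else 0)) =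
        ∑ j ∈ Finset.Ico r n, (if h : j < n then σ ⟨j, h⟩ ^ 2 else 0) := by
      have e1 : (∑ i : Fin n, (if r ≤ i.val then σ i ^ 2 else 0)) =
          ∑ i : Fin n, (fun j => if h : j < n then
            (if r ≤ j then σ ⟨j, h⟩ ^ 2 else 0) else 0) i.val :=
        Finset.sum_congr rfl fun i _ => by simp [i.isLt]
      rw [e1, Fin.sum_univ_eq_sum_range (fun j => if h : j < n then
        (if r ≤ j then σ ⟨j, h⟩ ^ 2 else 0) else 0)]
      rw [show Finset.Ico r n = (Finset.range n).filter (fun j => r ≤ j) by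
        ext j; simp only [Finset.mem_Ico, Finset.mem_filter, Finset.mem_range]; omega]
      rw [Finset.sum_filter]
      refine Finset.sum_congr rfl fun j hj => ?_
      rw [dif_pos (Finset.mem_range.mp hj)]
      split
      · rw [dif_pos (Finset.mem_range.mp hj)]
      · rfl
    have h4 : (∑ t : Fin n, aF t) =
        ∑ j ∈ Finset.Ico r n, (if h : j < n then σ ⟨j, h⟩ ^ 2 else 0) := by
      rw [Finset.sum_Ico_eq_sum_range]
      rw [Fin.sum_univ_eq_sum_range (fun t => if h : r + t < n then σ ⟨r + t, h⟩ ^ 2 else 0)]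
      rw [← Finset.sum_subset (Finset.range_subset_range.mpr (show n - r ≤ n by omega))
        (fun x _ hnx => dif_neg (by simp only [Finset.mem_range] at hnx; omega))]
    rw [h3, ← h4]
  have hfrob_le : frobSq E ≤ ∑ t, aF t := by
    rw [← hfrobKZ]; exact hBopt Z hZrank
  -- sum of sorted eigenvalues equals sum of eigenvalues
  have hdsum : (∑ t, d t) = ∑ j, μ j := by
    have e : Equiv.Perm (Fin n) := (Fin.revPerm).trans g
    exact Equiv.sum_comp ((Fin.revPerm).trans g) μ
  -- equality of d and aF
  have hsum_eq : ∀ t : Fin n, d t = aF t := by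
    have hle : (∑ t, aF t) ≤ ∑ t, d t := Finset.sum_le_sum fun t _ => claim1 t
    have hge : (∑ t, d t) ≤ ∑ t, aF t := by rw [hdsum, htrace]; exact hfrob_le
    have heq : (∑ t, aF t) = ∑ t, d t := le_antisymm hle hge
    intro t
    exact ((Finset.sum_eq_sum_iff_of_le (fun i _ => claim1 i)).mp heq t
      (Finset.mem_univ t)).symm
  -- conclude
  have htn : traceNorm E = ∑ j, Real.sqrt (μ j) := rfl
  calc traceNorm E = ∑ j, Real.sqrt (μ j) := rfl
    _ = ∑ t, Real.sqrt (d t) := (Equiv.sum_comp ((Fin.revPerm).trans g)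
        (fun j => Real.sqrt (μ j))).symm
    _ = ∑ t, Real.sqrt (aF t) := Finset.sum_congr rfl fun t _ => by rw [hsum_eq t]
    _ = ∑ t : Fin n, (if h : r + t.val < n then σ ⟨r + t.val, h⟩ else 0) := by
        refine Finset.sum_congr rfl fun t _ => ?_
        simp only [haFdef]
        split
        · exact Real.sqrt_sq (hσ0 _)
        · exact Real.sqrt_zero
    _ = ∑ t ∈ Finset.range n, (if h : r + t < n then σ ⟨r + t, h⟩ else 0) :=
        Fin.sum_univ_eq_sum_range (fun t => if h : r + t < n then σ ⟨r + t, h⟩ else 0) n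

/-- Tail-eigenvalue averaging: with eigenvalues
`σ₁ ≥ ⋯ ≥ σ_n ≥ 0` of SPSD `K` (sums past index `n` interpreted as zero),
`Σ_{i=s+1}^{s+k} σ_i ≤ (k/s)·Σ_{i=k+1}^{s+k} σ_i`, and consequently
`‖K − K_s‖_* + Σ_{i=s+1}^{s+k} σ_i ≤ (1 + k/s)·‖K − K_k‖_*`. -/
theorem tail_eigenvalue_bound {n s k : ℕ} (hk : 0 < k) (hks : k ≤ s)
    (K : Matrix (Fin n) (Fin n) ℝ) (hK : K.PosSemidef)
    (V : Matrix (Fin n) (Fin n) ℝ) (hV : Vᵀ * V = 1)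
    (σ : Fin n → ℝ) (hσ0 : ∀ i, 0 ≤ σ i) (hσmono : ∀ i j : Fin n, i ≤ j → σ j ≤ σ i)
    (hspec : K = V * diagonal σ * Vᵀ)
    (Ks : Matrix (Fin n) (Fin n) ℝ) (hKs : IsTruncatedSVD K Ks s)
    (Kk : Matrix (Fin n) (Fin n) ℝ) (hKk : IsTruncatedSVD K Kk k) :
    (∑ i ∈ Finset.Ico s (s + k), if h : i < n then σ ⟨i, h⟩ else 0) ≤
      ((k : ℝ) / s) * ∑ i ∈ Finset.Ico k (s + k), (if h : i < n then σ ⟨i, h⟩ else 0) ∧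
    traceNorm (K - Ks) + (∑ i ∈ Finset.Ico s (s + k), if h : i < n then σ ⟨i, h⟩ else 0) ≤
      (1 + (k : ℝ) / s) * traceNorm (K - Kk) := by
  have hs : 0 < s := lt_of_lt_of_le hk hks
  -- the ℕ-indexed eigenvalue sequence
  set σ' : ℕ → ℝ := fun i => if h : i < n then σ ⟨i, h⟩ else 0 with hσ'
  have hσ'0 : ∀ i, 0 ≤ σ' i := by
    intro i; simp only [hσ']; split
    · exact hσ0 _
    · exact le_rfl
  have hσ'anti : ∀ i j : ℕ, i ≤ j → σ' j ≤ σ' i := by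
    intro i j hij
    simp only [hσ']
    by_cases hj : j < n
    · have hi : i < n := lt_of_le_of_lt hij hj
      rw [dif_pos hj, dif_pos hi]
      exact hσmono _ _ (by simpa using hij)
    · rw [dif_neg hj]
      split
      · exact hσ0 _
      · exact le_rfl
  -- Part 1
  have part1 : (∑ i ∈ Finset.Ico s (s + k), σ' i) ≤
      ((k : ℝ) / s) * ∑ i ∈ Finset.Ico k (s + k), σ' i := by
    set t := σ' s with ht
    have hA : (∑ i ∈ Finset.Ico s (s + k), σ' i) ≤ (k : ℝ) * t := by
      calc (∑ i ∈ Finset.Ico s (s + k), σ' i) ≤ ∑ _i ∈ Finset.Ico s (s + k), t :=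
            Finset.sum_le_sum (fun i hi => hσ'anti s i (Finset.mem_Ico.mp hi).1)
        _ = (k : ℝ) * t := by rw [Finset.sum_const, Nat.card_Ico]; simp [nsmul_eq_mul]
    have hB : ((s : ℝ) - k) * t ≤ ∑ i ∈ Finset.Ico k s, σ' i := by
      calc ((s : ℝ) - k) * t = ∑ _i ∈ Finset.Ico k s, t := by
            rw [Finset.sum_const, Nat.card_Ico, nsmul_eq_mul, Nat.cast_sub hks]
        _ ≤ ∑ i ∈ Finset.Ico k s, σ' i :=
            Finset.sum_le_sum (fun i hi => hσ'anti i s (le_of_lt (Finset.mem_Ico.mp hi).2))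
    have hsplit : (∑ i ∈ Finset.Ico k (s + k), σ' i) =
        (∑ i ∈ Finset.Ico k s, σ' i) + ∑ i ∈ Finset.Ico s (s + k), σ' i :=
      (Finset.sum_Ico_consecutive _ hks (by omega)).symm
    rw [hsplit, div_mul_eq_mul_div, le_div_iff₀ (by positivity)]
    have h1 : ((s : ℝ) - k) * (∑ i ∈ Finset.Ico s (s + k), σ' i) ≤ ((s : ℝ) - k) * ((k : ℝ) * t) :=
      mul_le_mul_of_nonneg_left hA (by
        have : (k : ℝ) ≤ s := Nat.cast_le.mpr hks
        linarith)
    have h2 : (k : ℝ) * (((s : ℝ) - k) * t) ≤ (k : ℝ) * ∑ i ∈ Finset.Ico k s, σ' i :=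
      mul_le_mul_of_nonneg_left hB (by positivity)
    nlinarith [h1, h2]
  refine ⟨part1, ?_⟩
  -- the trace norms
  have tnS := traceNorm_trunc K V hV σ hσ0 hσmono hspec Ks hKs
  have tnK := traceNorm_trunc K V hV σ hσ0 hσmono hspec Kk hKk
  have hraw : ∀ r : ℕ, (∑ t ∈ Finset.range n, if h : r + t < n then σ ⟨r + t, h⟩ else 0) =
      ∑ t ∈ Finset.range n, σ' (r + t) := fun r => rfl
  rw [tnS, tnK, hraw, hraw]
  set N := s + k + n with hN
  have key : ∀ r : ℕ, r + n ≤ N → (∑ t ∈ Finset.range n, σ' (r + t)) =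
      ∑ i ∈ Finset.Ico r N, σ' i := by
    intro r hr
    rw [Finset.sum_Ico_eq_sum_range]
    have hcard : N - r = n + (N - r - n) := by omega
    rw [hcard, Finset.sum_range_add]
    have : ∀ j ∈ Finset.range (N - r - n), σ' (r + (n + j)) = 0 := by
      intro j _
      simp only [hσ']
      rw [dif_neg (by omega)]
    rw [Finset.sum_congr rfl this, Finset.sum_const, smul_zero, add_zero]
  rw [key s (by omega), key k (by omega)]
  have hFS : (∑ i ∈ Finset.Ico s N, σ' i) ≤ ∑ i ∈ Finset.Ico k N, σ' i :=
    Finset.sum_le_sum_of_subset_of_nonneg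
      (Finset.Ico_subset_Ico hks le_rfl) (fun i _ _ => hσ'0 i)
  have hG : (∑ i ∈ Finset.Ico k (s + k), σ' i) ≤ ∑ i ∈ Finset.Ico k N, σ' i :=
    Finset.sum_le_sum_of_subset_of_nonneg
      (Finset.Ico_subset_Ico le_rfl (by omega)) (fun i _ _ => hσ'0 i)
  have hmul : ((k : ℝ) / s) * (∑ i ∈ Finset.Ico k (s + k), σ' i) ≤
      ((k : ℝ) / s) * ∑ i ∈ Finset.Ico k N, σ' i :=
    mul_le_mul_of_nonneg_left hG (by positivity)
  have goal2 := le_trans part1 hmul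
  rw [one_add_mul]
  linarith [hFS, goal2]
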